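/- Let L_n be differentiable and (γ/2)-strongly convex on the set of vectors supported on I_S within radius r of β*, in the sense that L_n(β*) + ⟨∇L_n(β*), β − β*⟩ + (γ/4)‖β − β*‖₂² ≤ L_n(β) for all such β. If β̂ minimizes L_n over this set, then ‖β̂ − β*‖₂ ≤ (4√k/γ)·‖(∇L_n(β*))_{I_S}‖_∞, where k = |I_S|. -/

import Mathlib

open scoped BigOperators RealInnerProductSpace

/-! With `v = β̂ - β*`, the curvature bound at `β̂` together with `L β̂ ≤ L β*` gives
`γ/4 ‖v‖² ≤ -⟪∇L β*, v⟫`, and Hölder on `I_S` followed by `‖v‖₁ ≤ √k ‖v‖₂` bounds the right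
side by `√k · ‖(∇L β*)_{I_S}‖_∞ · ‖v‖`; dividing by `‖v‖` gives the claim. -/

namespace EuclideanSpace

variable {ι : Type*} [Fintype ι]

theorem sum_abs_le_sqrt_card_mul_norm (s : Finset ι) (v : EuclideanSpace ℝ ι) :
    ∑ i ∈ s, |v i| ≤ Real.sqrt s.card * ‖v‖ := by
  calc ∑ i ∈ s, |v i| = ∑ i ∈ s, 1 * |v i| := by simp only [one_mul]
    _ ≤ Real.sqrt (∑ i ∈ s, 1 ^ 2) * Real.sqrt (∑ i ∈ s, |v i| ^ 2) :=
        Real.sum_mul_le_sqrt_mul_sqrt s _ _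
    _ ≤ Real.sqrt s.card * ‖v‖ := by
        rw [EuclideanSpace.norm_eq]
        gcongr
        · simp
        · exact Finset.sum_le_sum_of_subset_of_nonneg (Finset.subset_univ s)
            fun i _ _ => by positivity

theorem abs_inner_le_sup'_mul_sum_abs (s : Finset ι) (hs : s.Nonempty)
    (x v : EuclideanSpace ℝ ι) (hv : ∀ i ∉ s, v i = 0) :
    |⟪x, v⟫| ≤ s.sup' hs (fun i => |x i|) * ∑ i ∈ s, |v i| := by
  have hinner : ⟪x, v⟫ = ∑ i ∈ s, x i * v i := by
    rw [PiLp.inner_apply, ← Finset.sum_subset (Finset.subset_univ s)]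
    · simp [mul_comm]
    · intro i _ hi
      simp [hv i hi]
  calc |⟪x, v⟫| ≤ ∑ i ∈ s, |x i * v i| := hinner ▸ Finset.abs_sum_le_sum_abs _ _
    _ ≤ ∑ i ∈ s, s.sup' hs (fun i => |x i|) * |v i| := by
        gcongr with i hi
        rw [abs_mul]
        gcongr
        exact Finset.le_sup' (fun i => |x i|) hi
    _ = s.sup' hs (fun i => |x i|) * ∑ i ∈ s, |v i| := (Finset.mul_sum ..).symm

end EuclideanSpace

theorem le_div_of_mul_sq_le_mul {a b t : ℝ} (ha : 0 < a) (hb : 0 ≤ b) (ht : 0 ≤ t)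
    (h : a * t ^ 2 ≤ b * t) : t ≤ b / a := by
  rcases ht.eq_or_lt with rfl | ht
  · positivity
  · rw [le_div_iff₀ ha]
    nlinarith

theorem restricted_minimizer_error_bound_general
    (p : ℕ) (L : EuclideanSpace ℝ (Fin p) → ℝ)
    (γ r : ℝ) (hγ : 0 < γ) (hr : 0 < r)
    (IS : Finset (Fin p)) (hIS : IS.Nonempty) (k : ℕ) (hk : IS.card = k)
    (βstar : EuclideanSpace ℝ (Fin p))
    (hβstar : ∀ i ∉ IS, βstar i = 0)
    (hSC : ∀ β : EuclideanSpace ℝ (Fin p), (∀ i ∉ IS, β i = 0) → ‖β - βstar‖ ≤ r →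
      L βstar + ⟪gradient L βstar, β - βstar⟫ + γ / 4 * ‖β - βstar‖ ^ 2 ≤ L β)
    (βhat : EuclideanSpace ℝ (Fin p))
    (hβhat_supp : ∀ i ∉ IS, βhat i = 0) (hβhat_ball : ‖βhat - βstar‖ ≤ r)
    (hmin : ∀ β : EuclideanSpace ℝ (Fin p), (∀ i ∉ IS, β i = 0) → ‖β - βstar‖ ≤ r →
      L βhat ≤ L β) :
    ‖βhat - βstar‖ ≤ 4 * Real.sqrt k / γ * IS.sup' hIS (fun i => |gradient L βstar i|) := by
  set g := gradient L βstar
  set v := βhat - βstar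
  set M := IS.sup' hIS (fun i => |g i|)
  have hM : 0 ≤ M := (abs_nonneg _).trans (Finset.le_sup' (fun i => |g i|) hIS.choose_spec)
  have hv : ∀ i ∉ IS, v i = 0 := fun i hi => by simp [v, hβstar i hi, hβhat_supp i hi]
  have hcurv : γ / 4 * ‖v‖ ^ 2 ≤ -⟪g, v⟫ := by
    linarith [hSC βhat hβhat_supp hβhat_ball, hmin βstar hβstar (by simpa using hr.le)]
  have hholder : -⟪g, v⟫ ≤ M * Real.sqrt k * ‖v‖ := by
    rw [mul_assoc, ← hk]
    exact (neg_le_abs _).trans <| (EuclideanSpace.abs_inner_le_sup'_mul_sum_abs IS hIS g v hv).trans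
      (mul_le_mul_of_nonneg_left (EuclideanSpace.sum_abs_le_sqrt_card_mul_norm IS v) hM)
  calc ‖v‖ ≤ M * Real.sqrt k / (γ / 4) :=
        le_div_of_mul_sq_le_mul (by positivity) (by positivity) (norm_nonneg v) (hcurv.trans hholder)
    _ = 4 * Real.sqrt k / γ * M := by field_simp

/-- If `L` is `(γ/2)`-strongly convex on vectors supported on `I_S` within radius `r`
of `β*` (in the sense of the first-order lower bound with curvature `γ/4`), and `β̂`
minimizes `L` over this set, then
`‖β̂ − β*‖₂ ≤ (4√k/γ)·max_{i ∈ I_S}|(∇L(β*))_i|`, where `k = |I_S|`. -/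
theorem restricted_minimizer_error_bound
    (p : ℕ) (L : EuclideanSpace ℝ (Fin p) → ℝ) (hL : Differentiable ℝ L)
    (γ r : ℝ) (hγ : 0 < γ) (hr : 0 < r)
    (IS : Finset (Fin p)) (hIS : IS.Nonempty) (k : ℕ) (hk : IS.card = k)
    (βstar : EuclideanSpace ℝ (Fin p))
    (hβstar : ∀ i ∉ IS, βstar i = 0)
    (hSC : ∀ β : EuclideanSpace ℝ (Fin p), (∀ i ∉ IS, β i = 0) → ‖β - βstar‖ ≤ r →
      L βstar + ⟪gradient L βstar, β - βstar⟫ + γ / 4 * ‖β - βstar‖ ^ 2 ≤ L β)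
    (βhat : EuclideanSpace ℝ (Fin p))
    (hβhat_supp : ∀ i ∉ IS, βhat i = 0) (hβhat_ball : ‖βhat - βstar‖ ≤ r)
    (hmin : ∀ β : EuclideanSpace ℝ (Fin p), (∀ i ∉ IS, β i = 0) → ‖β - βstar‖ ≤ r →
      L βhat ≤ L β) :
    ‖βhat - βstar‖ ≤ 4 * Real.sqrt k / γ * IS.sup' hIS (fun i => |gradient L βstar i|) :=
  restricted_minimizer_error_bound_general p L γ r hγ hr IS hIS k hk βstar hβstar hSC βhat
    hβhat_supp hβhat_ball hmin
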